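/- Let G be a finite group and H a subgroup of G such that the interval [H,G] in the subgroup lattice is a distributive lattice. Then there exists an irreducible finite-dimensional complex representation V of G such that the pointwise stabilizer of the H-fixed subspace equals H, i.e., G_{(V^H)} = H. -/

import Mathlib

/-!
Write `e_K ∈ ℂ[G]` for the averaging idempotent of a subgroup `K`, and let `M₁, …, Mₙ` be the
atoms of `[H, G]`. Distributivity gives `Mᵢ ⊓ (H ⊔ Mᵢ₊₁ ⊔ ⋯ ⊔ Mₙ) = H`, and with it one finds,
one atom at a time, a group element at which `P = (e_H - e_{M₁}) ⋯ (e_H - e_{Mₙ}) e_H` has a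
nonzero coefficient. As `ℂ[G]` is semisimple, `P` acts nontrivially on some simple left ideal `W`.
If `G_(W^H)` were larger than `H`, it would contain an atom `M`; as `e_H W = W^H` is fixed by `M`,
`e_M = e_M e_H` and `e_H` would agree on `W`, and the factor `e_H - e_M` of `P` would kill `W`.
-/

/-- The fixed-point subspace `V^H` of a subgroup `H` under a representation `ρ`. -/
def fixedSubmodule {G : Type*} [Group G] {V : Type*} [AddCommGroup V] [Module ℂ V]
    (ρ : Representation ℂ G V) (H : Subgroup G) : Submodule ℂ V where
  carrier := {v | ∀ h ∈ H, ρ h v = v}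
  add_mem' := by
    intro a b ha hb h hh
    rw [map_add, ha h hh, hb h hh]
  zero_mem' := by intro h hh; simp
  smul_mem' := by
    intro c v hv h hh
    rw [map_smul, hv h hh]

/-- The pointwise stabilizer subgroup `G_(X)` of a subset `X` under a representation `ρ`. -/
def repStab {G : Type*} [Group G] {V : Type*} [AddCommGroup V] [Module ℂ V]
    (ρ : Representation ℂ G V) (X : Set V) : Subgroup G where
  carrier := {g | ∀ x ∈ X, ρ g x = x}
  one_mem' := by intro x hx; simp
  mul_mem' := by
    intro a b ha hb x hx
    rw [map_mul, Module.End.mul_apply, hb x hx, ha x hx]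
  inv_mem' := by
    intro a ha x hx
    have h1 : ρ a x = x := ha x hx
    calc ρ a⁻¹ x = ρ a⁻¹ (ρ a x) := by rw [h1]
      _ = ρ (a⁻¹ * a) x := by rw [map_mul, Module.End.mul_apply]
      _ = x := by simp

/-- A representation is irreducible if the space is nontrivial and the only invariant
subspaces are `⊥` and `⊤`. -/
def IsIrredRep {G : Type*} [Group G] {V : Type*} [AddCommGroup V] [Module ℂ V]
    (ρ : Representation ℂ G V) : Prop :=
  Nontrivial V ∧ ∀ p : Submodule ℂ V, (∀ g : G, ∀ v ∈ p, ρ g v ∈ p) → p = ⊥ ∨ p = ⊤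

section DistribAbove

variable {α : Type*} [Lattice α]

def IsDistribAbove (a : α) : Prop :=
  ∀ x y z : α, a ≤ x → a ≤ y → a ≤ z → x ⊓ (y ⊔ z) = x ⊓ y ⊔ x ⊓ z

theorem CovBy.inf_eq_of_ne {a b c : α} (hb : a ⋖ b) (hc : a ⋖ c) (hbc : b ≠ c) : b ⊓ c = a := by
  have ha : a ≤ b ⊓ c := le_inf hb.le hc.le
  rcases hb.eq_or_eq ha inf_le_left with h | hb'
  · exact h
  rcases hc.eq_or_eq ha inf_le_right with h | hc'
  · exact h
  exact absurd (hb'.symm.trans hc') hbc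

theorem le_foldr_sup (a : α) (l : List α) : a ≤ l.foldr (· ⊔ ·) a := by
  induction l with
  | nil => exact le_rfl
  | cons b l ih => exact ih.trans le_sup_right

theorem IsDistribAbove.inf_foldr_sup_eq {a m : α} (hd : IsDistribAbove a) (hm : a ⋖ m)
    {l : List α} (hl : ∀ n ∈ l, a ⋖ n) (hml : m ∉ l) : m ⊓ l.foldr (· ⊔ ·) a = a := by
  induction l with
  | nil => exact inf_eq_right.2 hm.le
  | cons n l ih =>
    have hn : a ⋖ n := hl n List.mem_cons_self
    rw [List.foldr_cons, hd _ _ _ hm.le hn.le (le_foldr_sup a l),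
      hm.inf_eq_of_ne hn (fun h => hml (h ▸ List.mem_cons_self)),
      ih (fun n hn => hl n (List.mem_cons_of_mem _ hn)) (fun h => hml (List.mem_cons_of_mem _ h)),
      sup_idem]

end DistribAbove

namespace MonoidAlgebra

open scoped Classical

variable {k G : Type*} [Field k] [Group G] [Fintype G]

noncomputable def subgroupAverage (K : Subgroup G) : k[G] :=
  (Nat.card K : k)⁻¹ • ∑ g : K, single (g : G) 1

variable {K L : Subgroup G}

theorem coeff_subgroupAverage (K : Subgroup G) (x : G) :
    (subgroupAverage K : k[G]).coeff x = if x ∈ K then (Nat.card K : k)⁻¹ else 0 := by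
  rw [subgroupAverage, coeff_smul_apply, coeff_sum, Finsupp.finsetSum_apply, smul_eq_mul]
  simp_rw [coeff_single, Finsupp.single_apply]
  split_ifs with hx
  · lift x to K using hx
    simp
  · refine mul_eq_zero_of_right _ (Finset.sum_eq_zero fun g _ => if_neg ?_)
    rintro rfl
    exact hx g.2

theorem support_subgroupAverage_subset (K : Subgroup G) :
    ((subgroupAverage K : k[G]).coeff.support : Set G) ⊆ K := by
  intro x hx
  by_contra hxK
  exact Finsupp.mem_support_iff.1 hx (by rw [coeff_subgroupAverage, if_neg (show x ∉ K from hxK)])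

omit [Fintype G] in
theorem support_mul_subset_of_subgroup {J : Subgroup G} {f g : k[G]}
    (hf : (f.coeff.support : Set G) ⊆ J) (hg : (g.coeff.support : Set G) ⊆ J) :
    ((f * g).coeff.support : Set G) ⊆ J := by
  intro x hx
  obtain ⟨a, ha, b, hb, rfl⟩ := Finset.mem_mul.1 (support_coeff_mul_subset f g hx)
  exact J.mul_mem (hf ha) (hg hb)

theorem single_mul_subgroupAverage {g : G} (hg : g ∈ K) :
    single g (1 : k) * subgroupAverage K = subgroupAverage K := by
  rw [subgroupAverage, mul_smul_comm, Finset.mul_sum]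
  simp_rw [single_mul_single, one_mul]
  congr 1
  exact Fintype.sum_equiv (Equiv.mulLeft ⟨g, hg⟩) _ _ fun _ => rfl

theorem subgroupAverage_mul_single {g : G} (hg : g ∈ K) :
    subgroupAverage K * single g (1 : k) = subgroupAverage K := by
  rw [subgroupAverage, smul_mul_assoc, Finset.sum_mul]
  simp_rw [single_mul_single, mul_one]
  congr 1
  exact Fintype.sum_equiv (Equiv.mulRight ⟨g, hg⟩) _ _ fun _ => rfl

theorem coeff_subgroupAverage_mul (K : Subgroup G) (f : k[G]) (x : G) :
    (subgroupAverage K * f).coeff x = (Nat.card K : k)⁻¹ * ∑ g : K, f.coeff ((g : G)⁻¹ * x) := by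
  rw [subgroupAverage, smul_mul_assoc, Finset.sum_mul, coeff_smul_apply, coeff_sum,
    Finsupp.finsetSum_apply, smul_eq_mul]
  simp_rw [coeff_single_mul_apply, one_mul]

/-- A term `g ∈ M` of the defining sum survives only if `g⁻¹ x ∈ J`, i.e. `g ∈ M ⊓ J ≤ H`. -/
theorem coeff_subgroupAverage_mul_of_inf_le {H M J : Subgroup G} {f : k[G]} (hHM : H ≤ M)
    (hMJ : M ⊓ J ≤ H) (hf : (f.coeff.support : Set G) ⊆ J)
    (hinv : ∀ h ∈ H, single h (1 : k) * f = f) {x : G} (hx : x ∈ J) :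
    (subgroupAverage M * f).coeff x = (Nat.card M : k)⁻¹ * (Nat.card H * f.coeff x) := by
  have hsum : ∑ g : M, f.coeff ((g : G)⁻¹ * x) = ∑ _h : H, f.coeff x := by
    refine (Fintype.sum_of_injective (Subgroup.inclusion hHM) (Subgroup.inclusion_injective hHM)
      _ _ (fun g hg => ?_) (fun h => ?_)).symm
    · by_contra hne
      have hgx : (g : G)⁻¹ * x ∈ J := hf (Finsupp.mem_support_iff.2 hne)
      have hgJ : (g : G) ∈ J := by simpa using J.mul_mem hx (J.inv_mem hgx)
      exact hg ⟨⟨g, hMJ ⟨g.2, hgJ⟩⟩, rfl⟩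
    · conv_lhs => rw [← hinv h h.2]
      rw [coeff_single_mul_apply, one_mul]
      rfl
  rw [coeff_subgroupAverage_mul, hsum, Finset.sum_const, Finset.card_univ,
    Nat.card_eq_fintype_card (α := H), nsmul_eq_mul]

variable (H : Subgroup G)

noncomputable def averageDiffProd : List (Subgroup G) → k[G]
  | [] => subgroupAverage H
  | M :: l => (subgroupAverage H - subgroupAverage M) * averageDiffProd l

variable {H}

theorem single_mul_averageDiffProd {l : List (Subgroup G)} (hl : ∀ M ∈ l, H ≤ M) {h : G}
    (hh : h ∈ H) : single h (1 : k) * averageDiffProd H l = averageDiffProd H l := by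
  cases l with
  | nil => exact single_mul_subgroupAverage hh
  | cons M l =>
    rw [averageDiffProd, ← mul_assoc, mul_sub, single_mul_subgroupAverage hh,
      single_mul_subgroupAverage (hl M List.mem_cons_self hh)]

theorem support_averageDiffProd_subset (l : List (Subgroup G)) :
    ((averageDiffProd H l : k[G]).coeff.support : Set G) ⊆ (l.foldr (· ⊔ ·) H : Subgroup G) := by
  induction l with
  | nil => exact support_subgroupAverage_subset H
  | cons M l ih =>
    have hH : H ≤ M ⊔ l.foldr (· ⊔ ·) H := (le_foldr_sup H l).trans le_sup_right
    refine support_mul_subset_of_subgroup (fun x hx => ?_)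
      (ih.trans (SetLike.coe_subset_coe.2 le_sup_right))
    rw [coeff_sub] at hx
    rcases Finset.mem_union.1 (Finsupp.support_sub hx) with hx | hx
    · exact hH (support_subgroupAverage_subset H hx)
    · exact le_sup_left (a := M) (support_subgroupAverage_subset M hx)

theorem averageDiffProd_mem_of_mem {I : Ideal k[G]} [I.IsTwoSided] {M : Subgroup G}
    (hM : subgroupAverage H - subgroupAverage M ∈ I) :
    ∀ {l : List (Subgroup G)}, M ∈ l → averageDiffProd H l ∈ I
  | N :: l, hl => by
    rcases List.mem_cons.1 hl with rfl | hl
    · exact I.mul_mem_right _ hM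
    · exact I.mul_mem_left _ (averageDiffProd_mem_of_mem hM hl)

variable [CharZero k]

theorem subgroupAverage_smul_eq_self {V : Type*} [AddCommMonoid V] [Module k V]
    [Module k[G] V] [IsScalarTower k k[G] V] {v : V} (hv : ∀ g ∈ K, single g (1 : k) • v = v) :
    (subgroupAverage K : k[G]) • v = v := by
  rw [subgroupAverage, smul_assoc, Finset.sum_smul, Finset.sum_congr rfl fun g _ => hv _ g.2,
    Finset.sum_const, Finset.card_univ, ← Nat.card_eq_fintype_card, ← Nat.cast_smul_eq_nsmul k,
    smul_smul, inv_mul_cancel₀ (NeZero.ne _), one_smul]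

theorem subgroupAverage_mul_subgroupAverage_of_le (hLK : L ≤ K) :
    subgroupAverage K * (subgroupAverage L : k[G]) = subgroupAverage K := by
  nth_rw 2 [subgroupAverage]
  rw [mul_smul_comm, Finset.mul_sum,
    Finset.sum_congr rfl fun g _ => subgroupAverage_mul_single (hLK g.2),
    Finset.sum_const, Finset.card_univ, ← Nat.card_eq_fintype_card, ← Nat.cast_smul_eq_nsmul k,
    smul_smul, inv_mul_cancel₀ (NeZero.ne _), one_smul]

theorem averageDiffProd_cons {M : Subgroup G} {l : List (Subgroup G)} (hl : ∀ N ∈ l, H ≤ N) :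
    (averageDiffProd H (M :: l) : k[G]) =
      averageDiffProd H l - subgroupAverage M * averageDiffProd H l := by
  rw [averageDiffProd, sub_mul, ← smul_eq_mul (subgroupAverage H),
    subgroupAverage_smul_eq_self fun h hh => single_mul_averageDiffProd hl hh]

theorem _root_.IsDistribAbove.exists_coeff_averageDiffProd_ne_zero (hd : IsDistribAbove H) :
    ∀ {l : List (Subgroup G)}, l.Nodup → (∀ M ∈ l, H ⋖ M) →
      ∃ x ∈ l.foldr (· ⊔ ·) H, (averageDiffProd H l : k[G]).coeff x ≠ 0
  | [], _, _ => ⟨1, one_mem _, by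
      rw [averageDiffProd, coeff_subgroupAverage, if_pos H.one_mem]
      exact inv_ne_zero (NeZero.ne _)⟩
  | M :: l, hnd, hl => by
    set J := l.foldr (· ⊔ ·) H
    have hM : H ⋖ M := hl M List.mem_cons_self
    have hl' : ∀ N ∈ l, H ⋖ N := fun N hN => hl N (List.mem_cons_of_mem M hN)
    have hMJ : M ⊓ J = H := hd.inf_foldr_sup_eq hM hl' (List.nodup_cons.1 hnd).1
    obtain ⟨x, hxJ, hx⟩ := hd.exists_coeff_averageDiffProd_ne_zero (List.nodup_cons.1 hnd).2 hl'
    obtain ⟨m, hmM, hmH⟩ := SetLike.exists_of_lt hM.lt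
    have hmx : m * x ∉ J := fun h =>
      hmH (hMJ ▸ ⟨hmM, by simpa using J.mul_mem h (J.inv_mem hxJ)⟩)
    have htrans : (subgroupAverage M * averageDiffProd H l : k[G]).coeff (m * x) =
        (subgroupAverage M * averageDiffProd H l : k[G]).coeff x := by
      conv_rhs => rw [← single_mul_subgroupAverage (M.inv_mem hmM), mul_assoc]
      rw [coeff_single_mul_apply, inv_inv, one_mul]
    refine ⟨m * x, mul_mem (le_sup_left (b := J) hmM) (le_sup_right (a := M) hxJ), ?_⟩
    -- `averageDiffProd H l` is supported in `J ∌ m * x`; only `e_M * averageDiffProd H l` counts.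
    rw [averageDiffProd_cons fun N hN => (hl' N hN).le, coeff_sub, Finsupp.sub_apply,
      Finsupp.notMem_support_iff.1 fun h => hmx (support_averageDiffProd_subset l h), zero_sub,
      neg_ne_zero, htrans, coeff_subgroupAverage_mul_of_inf_le hM.le hMJ.le
        (support_averageDiffProd_subset l) (fun h hh => single_mul_averageDiffProd
          (fun N hN => (hl' N hN).le) hh) hxJ]
    exact mul_ne_zero (inv_ne_zero (NeZero.ne _)) (mul_ne_zero (NeZero.ne _) hx)

theorem _root_.IsDistribAbove.averageDiffProd_ne_zero (hd : IsDistribAbove H)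
    {l : List (Subgroup G)} (hnd : l.Nodup) (hl : ∀ M ∈ l, H ⋖ M) : (averageDiffProd H l : k[G]) ≠ 0 := by
  obtain ⟨x, -, hx⟩ := hd.exists_coeff_averageDiffProd_ne_zero (k := k) hnd hl
  exact fun h => hx (by rw [h]; rfl)

end MonoidAlgebra

open MonoidAlgebra

theorem exists_isSimpleModule_notMem_annihilator {A : Type*} [Ring A] [IsSemisimpleRing A]
    {a : A} (ha : a ≠ 0) : ∃ W : Submodule A A, IsSimpleModule A W ∧ a ∉ W.annihilator := by
  by_contra! h
  have htop : a ∈ (⊤ : Submodule A A).annihilator := by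
    rw [← IsSemisimpleModule.sSup_simples_eq_top, sSup_eq_iSup', Submodule.annihilator_iSup]
    exact Ideal.mem_iInf.2 fun W => h W W.2
  exact ha (by simpa using Submodule.mem_annihilator.1 htop 1 trivial)

section Representation

theorem le_repStab_fixedSubmodule {G V : Type*} [Group G] [AddCommGroup V] [Module ℂ V]
    (ρ : Representation ℂ G V) (H : Subgroup G) :
    H ≤ repStab ρ (fixedSubmodule ρ H) :=
  fun h hh _ hv => hv h hh

variable {G : Type*} [Group G] {V : Type*} [AddCommGroup V] [Module ℂ V] [Module ℂ[G] V]
  [IsScalarTower ℂ ℂ[G] V]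

theorem isIrredRep_ofModule' [IsSimpleModule ℂ[G] V] :
    IsIrredRep (Representation.ofModule' (k := ℂ) (G := G) V) := by
  refine ⟨IsSimpleModule.nontrivial ℂ[G] V, fun p hp => ?_⟩
  obtain ⟨q, rfl⟩ : ∃ q : Submodule ℂ[G] V, q.restrictScalars ℂ = p := by
    refine ⟨{ p with smul_mem' := fun a v hv => ?_ }, rfl⟩
    induction a using MonoidAlgebra.induction_linear with
    | zero => rw [zero_smul]; exact p.zero_mem
    | add a b ha hb => rw [add_smul]; exact p.add_mem ha hb
    | single g c =>
      rw [← mul_one c, ← smul_single', smul_assoc]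
      exact p.smul_mem c (hp g v hv)
  rcases eq_bot_or_eq_top q with rfl | rfl
  · exact Or.inl (Submodule.restrictScalars_bot ℂ ℂ[G] V)
  · exact Or.inr (Submodule.restrictScalars_top ℂ ℂ[G] V)

variable [Fintype G]

theorem sub_subgroupAverage_mem_annihilator {H M : Subgroup G} (hHM : H ≤ M)
    (hM : M ≤ repStab (Representation.ofModule' V)
      (fixedSubmodule (Representation.ofModule' V) H)) :
    subgroupAverage H - subgroupAverage M ∈ Module.annihilator ℂ[G] V := by
  refine Module.mem_annihilator.2 fun v => ?_
  have hfix : (subgroupAverage H : ℂ[G]) • v ∈ fixedSubmodule (Representation.ofModule' V) H :=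
    fun h hh => by
      change single h (1 : ℂ) • (subgroupAverage H : ℂ[G]) • v = _
      rw [smul_smul, single_mul_subgroupAverage hh]
  have hMfix : (subgroupAverage M : ℂ[G]) • (subgroupAverage H : ℂ[G]) • v =
      (subgroupAverage H : ℂ[G]) • v :=
    subgroupAverage_smul_eq_self fun g hg => hM hg _ hfix
  rw [sub_smul, ← hMfix, smul_smul, subgroupAverage_mul_subgroupAverage_of_le hHM, sub_self]

theorem repStab_fixedSubmodule_eq {H : Subgroup G} {l : List (Subgroup G)}
    (hl : ∀ M, H ⋖ M → M ∈ l) (hP : averageDiffProd H l ∉ Module.annihilator ℂ[G] V) :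
    repStab (Representation.ofModule' V) (fixedSubmodule (Representation.ofModule' V) H) = H := by
  have hle := le_repStab_fixedSubmodule (Representation.ofModule' V) H
  refine le_antisymm ?_ hle
  by_contra hK
  obtain ⟨M, hHM, hMK⟩ := exists_covBy_le_of_lt (lt_of_le_not_ge hle hK)
  exact hP (averageDiffProd_mem_of_mem (sub_subgroupAverage_mem_annihilator hHM.le hMK) (hl M hHM))

end Representation

/-- **Dual Ore's theorem.** A distributive interval `[H, G]` of a finite group is
linearly primitive: there is an irreducible finite-dimensional complex representation
`V` of `G` with `G_(V^H) = H`. -/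
theorem distributive_interval_linearly_primitive {G : Type} [Group G] [Finite G]
    (H : Subgroup G)
    (hdist : ∀ x y z : Subgroup G, H ≤ x → H ≤ y → H ≤ z →
      x ⊓ (y ⊔ z) = (x ⊓ y) ⊔ (x ⊓ z)) :
    ∃ V : FDRep ℂ G, IsIrredRep V.ρ ∧ repStab V.ρ ↑(fixedSubmodule V.ρ H) = H := by
  obtain ⟨_⟩ := nonempty_fintype G
  obtain ⟨l, hnd, hl⟩ : ∃ l : List (Subgroup G), l.Nodup ∧ ∀ M, M ∈ l ↔ H ⋖ M :=
    ⟨(Set.toFinite {M | H ⋖ M}).toFinset.toList, Finset.nodup_toList _, by simp⟩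
  have hP : (averageDiffProd H l : ℂ[G]) ≠ 0 :=
    IsDistribAbove.averageDiffProd_ne_zero hdist hnd fun M => (hl M).1
  obtain ⟨W, _, hPW⟩ := exists_isSimpleModule_notMem_annihilator hP
  exact ⟨FDRep.of (Representation.ofModule' W), isIrredRep_ofModule',
    repStab_fixedSubmodule_eq (fun M => (hl M).2) hPW⟩
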